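/- Let r ≥ 0 be an integer, q ∈ ℂ with 0 < |q| < 1, and a_1,…,a_{r+1}, b_1,…,b_r ∈ ℂ such that b_j q^k ≠ 1 for all j and all integers k ≥ 0. Let f(z) = _{r+1}φ_r(a_1,…,a_{r+1}; b_1,…,b_r; q, z) and let T denote the shift (T f)(z) = f(qz). Then for every z with |z| < 1, f satisfies the q-difference equation [(1 − T) ∏_{i=1}^r (1 − q^{−1} b_i T) − z ∏_{i=1}^{r+1} (1 − a_i T)] f(z) = 0, where the operator products are expanded formally (all the commuting shift operators act first and then the result is multiplied by z in the second term); explicitly, Σ_{S ⊆ {0,1,…,r}} (−1)^{|S|} (∏_{i∈S, i≥1} q^{−1}b_i) f(q^{|S|} z) − z Σ_{S ⊆ {1,…,r+1}} (−1)^{|S|} (∏_{i∈S} a_i) f(q^{|S|} z) = 0. -/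

import Mathlib

/-!
STATEMENT 2: The basic hypergeometric series `f(z) = _{r+1}φ_r(a; b; q, z)` satisfies the
`q`-difference equation
`[(1 - T) ∏_{i=1}^r (1 - q⁻¹ bᵢ T) - z ∏_{i=1}^{r+1} (1 - aᵢ T)] f(z) = 0`,
written out explicitly as a sum over subsets.  In the first sum the index set is
`{0, 1, …, r}` where index `0` contributes a factor `1` (the `(1 - T)` factor) and index
`i ≥ 1` contributes a factor `q⁻¹ bᵢ`; in the second sum the index set is `{1, …, r+1}`
and index `i` contributes a factor `aᵢ`.
-/

/-- `(a;q)_m = ∏_{k=0}^{m-1} (1 - a q^k)` for `m : ℕ`. -/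
noncomputable def qPochN (a q : ℂ) (m : ℕ) : ℂ := ∏ k ∈ Finset.range m, (1 - a * q ^ k)

/-- The basic hypergeometric series `_{r+1}φ_r(a₁,…,a_{r+1}; b₁,…,b_r; q, z)`. -/
noncomputable def bhs {r : ℕ} (a : Fin (r + 1) → ℂ) (b : Fin r → ℂ) (q z : ℂ) : ℂ :=
  ∑' m : ℕ, (∏ i, qPochN (a i) q m) / (qPochN q q m * ∏ j, qPochN (b j) q m) * z ^ m

open Finset Filter

lemma subset_sum_eq_prod {n : ℕ} (w : Fin n → ℂ) (x : ℂ) :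
    ∑ S ∈ (Finset.univ : Finset (Fin n)).powerset,
      (-1:ℂ)^S.card * (∏ i ∈ S, w i) * x^S.card = ∏ i, (1 - w i * x) := by
  have h : ∀ i : Fin n, (1 : ℂ) - w i * x = (-(w i * x)) + 1 := fun i => by ring
  simp only [h, Finset.prod_add, Finset.prod_const_one, mul_one]
  refine (Finset.sum_congr rfl fun S hS => ?_).symm
  have : ∀ i : Fin n, -(w i * x) = (-1) * (w i * x) := fun i => by ring
  simp only [this, Finset.prod_mul_distrib, Finset.prod_const]
  ring

lemma qPochN_succ (a q : ℂ) (m : ℕ) :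
    qPochN a q (m+1) = qPochN a q m * (1 - a * q ^ m) := Finset.prod_range_succ _ _


set_option maxHeartbeats 1000000 in
theorem stmt2 (r : ℕ) (q : ℂ) (hq0 : 0 < ‖q‖) (hq1 : ‖q‖ < 1)
    (a : Fin (r + 1) → ℂ) (b : Fin r → ℂ)
    (hb : ∀ j : Fin r, ∀ k : ℕ, b j * q ^ k ≠ 1) :
    ∀ z : ℂ, ‖z‖ < 1 →
      (∑ S ∈ (Finset.univ : Finset (Fin (r + 1))).powerset,
          (-1 : ℂ) ^ S.card *
            (∏ i ∈ S, Fin.cases (motive := fun _ => ℂ) 1 (fun j => q⁻¹ * b j) i) *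
            bhs a b q (q ^ S.card * z))
        - z * (∑ S ∈ (Finset.univ : Finset (Fin (r + 1))).powerset,
            (-1 : ℂ) ^ S.card * (∏ i ∈ S, a i) * bhs a b q (q ^ S.card * z)) = 0 := by
  intro z hz
  have hqne : q ≠ 0 := fun h => by simp [h] at hq0
  have hqpow : ∀ k : ℕ, q ^ (k + 1) ≠ 1 := by
    intro k h
    have h2 : ‖q‖ ^ (k+1) = 1 := by
      rw [← norm_pow, h, norm_one]
    have h3 : ‖q‖ ^ (k+1) < 1 :=
      pow_lt_one₀ (norm_nonneg q) hq1 (Nat.succ_ne_zero k)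
    linarith
  have hDq : ∀ m, qPochN q q m ≠ 0 := by
    intro m
    rw [qPochN, Finset.prod_ne_zero_iff]
    intro k _
    rw [sub_ne_zero]
    intro h
    exact hqpow k (by rw [pow_succ']; exact h.symm)
  have hDb : ∀ (j : Fin r) m, qPochN (b j) q m ≠ 0 := by
    intro j m
    rw [qPochN, Finset.prod_ne_zero_iff]
    intro k _
    exact sub_ne_zero.mpr (Ne.symm (hb j k))
  set c : ℕ → ℂ := fun m =>
    (∏ i, qPochN (a i) q m) / (qPochN q q m * ∏ j, qPochN (b j) q m) with hc
  have hbhs : ∀ w : ℂ, bhs a b q w = ∑' m, c m * w ^ m := fun w => rfl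
  have hBne : ∀ m, (∏ j, (1 - b j * q ^ m)) ≠ 0 := fun m =>
    Finset.prod_ne_zero_iff.mpr fun j _ => sub_ne_zero.mpr (Ne.symm (hb j m))
  have hq1m : ∀ m : ℕ, (1 : ℂ) - q ^ (m+1) ≠ 0 := fun m =>
    sub_ne_zero.mpr (Ne.symm (hqpow m))
  have hDne : ∀ m, (1 - q ^ (m+1)) * (∏ j, (1 - b j * q ^ m)) ≠ 0 := fun m =>
    mul_ne_zero (hq1m m) (hBne m)
  -- the key recurrence
  have hrec : ∀ m, c (m+1) * ((1 - q ^ (m+1)) * ∏ j, (1 - b j * q ^ m))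
      = c m * ∏ i, (1 - a i * q ^ m) := by
    intro m
    have hDqm := hDq m
    have hDbm : (∏ j, qPochN (b j) q m) ≠ 0 :=
      Finset.prod_ne_zero_iff.mpr fun j _ => hDb j m
    have hBm := hBne m
    have hq1m' := hq1m m
    simp only [hc, qPochN_succ, Finset.prod_mul_distrib]
    rw [show qPochN q q m * (1 - q * q ^ m) = qPochN q q m * (1 - q ^ (m+1)) by
      rw [pow_succ']]
    rw [div_mul_eq_mul_div, div_mul_eq_mul_div, div_eq_div_iff
      (mul_ne_zero (mul_ne_zero hDqm hq1m') (mul_ne_zero hDbm hBm)) (mul_ne_zero hDqm hDbm)]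
    ring
  -- summability
  have hsum : ∀ w : ℂ, ‖w‖ < 1 → Summable (fun m => c m * w ^ m) := by
    intro w hw
    apply summable_of_ratio_norm_eventually_le (r := (1 + ‖w‖)/2)
    · linarith
    · have htq : Tendsto (fun m : ℕ => q ^ m) atTop (nhds 0) :=
        tendsto_pow_atTop_nhds_zero_of_norm_lt_one hq1
      have hnum : Tendsto (fun m : ℕ => ∏ i, (1 - a i * q ^ m)) atTop (nhds 1) := by
        have hcont : Continuous (fun x : ℂ => ∏ i, (1 - a i * x)) :=
          continuous_finset_prod _ fun i _ =>
            continuous_const.sub (continuous_const.mul continuous_id)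
        have h2 := hcont.continuousAt.tendsto.comp htq
        simpa [Function.comp_def] using h2
      have hden : Tendsto (fun m : ℕ => (1 - q ^ (m+1)) * ∏ j, (1 - b j * q ^ m))
          atTop (nhds 1) := by
        have hcont : Continuous (fun x : ℂ => (1 - q * x) * ∏ j, (1 - b j * x)) :=
          (continuous_const.sub (continuous_const.mul continuous_id)).mul
            (continuous_finset_prod _ fun j _ =>
              continuous_const.sub (continuous_const.mul continuous_id))
        have h2 := hcont.continuousAt.tendsto.comp htq
        simp only [Function.comp_def, mul_zero, sub_zero, one_mul,
          Finset.prod_const_one, mul_one] at h2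
        refine h2.congr fun m => ?_
        rw [pow_succ']
      have h1 : Tendsto (fun m : ℕ => ‖∏ i, (1 - a i * q ^ m)‖)
          atTop (nhds 1) := by
        have h2 := (continuous_norm.continuousAt.tendsto.comp hnum)
        simpa only [Function.comp_def, norm_one] using h2
      have h2 : Tendsto (fun m : ℕ =>
          ‖(1 - q ^ (m+1)) * ∏ j, (1 - b j * q ^ m)‖) atTop (nhds 1) := by
        have h3 := (continuous_norm.continuousAt.tendsto.comp hden)
        simpa only [Function.comp_def, norm_one] using h3
      have hg : Tendsto (fun m : ℕ => ‖w‖ *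
          (‖∏ i, (1 - a i * q ^ m)‖ /
            ‖(1 - q ^ (m+1)) * ∏ j, (1 - b j * q ^ m)‖))
          atTop (nhds ‖w‖) := by
        have h4 := (tendsto_const_nhds (x := ‖w‖)
          (f := atTop (α := ℕ))).mul (h1.div h2 one_ne_zero)
        simpa using h4
      have hlt : ‖w‖ < (1 + ‖w‖)/2 := by linarith
      filter_upwards [hg.eventually (gt_mem_nhds hlt)] with m hm
      have hcsucc : c (m+1) = c m * (∏ i, (1 - a i * q ^ m)) /
          ((1 - q ^ (m+1)) * ∏ j, (1 - b j * q ^ m)) :=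
        eq_div_of_mul_eq (hDne m) (hrec m)
      have hkey : c (m+1) * w ^ (m+1) =
          (w * ((∏ i, (1 - a i * q ^ m)) / ((1 - q ^ (m+1)) * ∏ j, (1 - b j * q ^ m))))
            * (c m * w ^ m) := by
        rw [hcsucc]; ring
      have habs : ‖(w * ((∏ i, (1 - a i * q ^ m)) /
            ((1 - q ^ (m+1)) * ∏ j, (1 - b j * q ^ m)))) * (c m * w ^ m)‖
          = (‖w‖ * (‖∏ i, (1 - a i * q ^ m)‖ /
            ‖(1 - q ^ (m+1)) * ∏ j, (1 - b j * q ^ m)‖))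
              * ‖c m * w ^ m‖ := by
        rw [norm_mul, norm_mul, norm_div]
      have hnn : 0 ≤ ‖c m * w ^ m‖ := norm_nonneg _
      rw [hkey, habs]
      exact mul_le_mul_of_nonneg_right (le_of_lt hm) hnn
  have hqz : ∀ k : ℕ, ‖q ^ k * z‖ < 1 := by
    intro k
    rw [norm_mul, norm_pow]
    calc ‖q‖ ^ k * ‖z‖ ≤ 1 * ‖z‖ :=
          mul_le_mul_of_nonneg_right
            (pow_le_one₀ (norm_nonneg q) (le_of_lt hq1)) (norm_nonneg z)
      _ < 1 := by rw [one_mul]; exact hz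
  -- summability of each S-term and the product form
  have hsummS : ∀ (x : Fin (r+1) → ℂ) (S : Finset (Fin (r+1))),
      Summable (fun m => (-1:ℂ)^S.card * (∏ i ∈ S, x i) * ((q ^ m) ^ S.card)
        * (c m * z ^ m)) := by
    intro x S
    refine ((hsum (q ^ S.card * z) (hqz S.card)).mul_left
      ((-1:ℂ)^S.card * (∏ i ∈ S, x i))).congr fun m => ?_
    rw [mul_pow]
    ring
  have key : ∀ x : Fin (r+1) → ℂ,
      (∑ S ∈ (Finset.univ : Finset (Fin (r+1))).powerset,
        (-1:ℂ)^S.card * (∏ i ∈ S, x i) * bhs a b q (q ^ S.card * z))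
      = ∑' m, c m * z ^ m * ∏ i, (1 - x i * q ^ m) := by
    intro x
    have hS : ∀ S ∈ (Finset.univ : Finset (Fin (r+1))).powerset,
        (-1:ℂ)^S.card * (∏ i ∈ S, x i) * bhs a b q (q ^ S.card * z)
          = ∑' m, ((-1:ℂ)^S.card * (∏ i ∈ S, x i) * ((q ^ m) ^ S.card)
              * (c m * z ^ m)) := by
      intro S _
      rw [hbhs, ← tsum_mul_left]
      refine tsum_congr fun m => ?_
      rw [mul_pow]
      ring
    rw [Finset.sum_congr rfl hS, ← Summable.tsum_finsetSum (fun S _ => hsummS x S)]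
    refine tsum_congr fun m => ?_
    rw [← subset_sum_eq_prod x (q ^ m), Finset.mul_sum]
    refine Finset.sum_congr rfl fun S _ => ?_
    ring
  have hsumProd : ∀ x : Fin (r+1) → ℂ,
      Summable (fun m => c m * z ^ m * ∏ i, (1 - x i * q ^ m)) := by
    intro x
    refine ((hasSum_sum (s := (Finset.univ : Finset (Fin (r+1))).powerset)
      (fun S _ => (hsummS x S).hasSum)).summable).congr fun m => ?_
    rw [← subset_sum_eq_prod x (q ^ m), Finset.mul_sum]
    refine Finset.sum_congr rfl fun S _ => ?_
    ring
  set w : Fin (r+1) → ℂ := Fin.cases (motive := fun _ => ℂ) 1 (fun j => q⁻¹ * b j) with hw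
  rw [key w, key a, sub_eq_zero, ← tsum_mul_left,
    Summable.tsum_eq_zero_add (hsumProd w)]
  have h0 : c 0 * z ^ 0 * ∏ i, (1 - w i * q ^ 0) = 0 := by
    have : (1 : ℂ) - w 0 * q ^ 0 = 0 := by simp [hw]
    rw [Finset.prod_eq_zero (Finset.mem_univ 0) this, mul_zero]
  rw [h0, zero_add]
  refine tsum_congr fun m => ?_
  have hprodw : (∏ i, (1 - w i * q ^ (m+1)))
      = (1 - q ^ (m+1)) * ∏ j, (1 - b j * q ^ m) := by
    rw [Fin.prod_univ_succ]
    simp only [hw, Fin.cases_zero, Fin.cases_succ, one_mul]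
    congr 1
    refine Finset.prod_congr rfl fun j _ => ?_
    rw [pow_succ']
    field_simp
  rw [hprodw]
  linear_combination z ^ (m+1) * hrec m
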